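/- Let x be a circular string of length G over {A,C,G,T} with f_A occurrences of the letter A, and let y be obtained from x by the random substitution process with rate p, with f'_A occurrences of A in y. If G ≠ 4·f_A, then the estimator p̂ = 3·(f'_A − f_A)/(G − 4·f_A) satisfies E[p̂] = p. -/

import Mathlib

open MeasureTheory

noncomputable section

/-- Substitution kernel weight: probability that letter `a` becomes letter `b`
under the rate-`q` substitution process. -/
def substW (q : ℝ) (a b : Fin 4) : ℝ := if b = a then 1 - q else q / 3

/-- The discrete measure on a finite type with weight function `w`. -/
def discMeasure {α : Type*} [Fintype α] [MeasurableSpace α] (w : α → ℝ) : Measure α :=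
  ∑ a : α, ENNReal.ofReal (w a) • Measure.dirac a

/-- Weight of outcome `y` for the rate-`p` substitution process applied to `x`. -/
def mutateW {G : ℕ} (p : ℝ) (x y : Fin G → Fin 4) : ℝ := ∏ i, substW p (x i) (y i)

/-- Distribution of the string obtained from `x` by the random substitution
process with rate `p`: i.i.d. substitutions at every position. -/
def mutate {G : ℕ} (p : ℝ) (x : Fin G → Fin 4) : Measure (Fin G → Fin 4) :=
  discMeasure (mutateW p x)

/-- Number of occurrences of the letter `a` in the string `z`. -/
def countLetter {G : ℕ} (z : Fin G → Fin 4) (a : Fin 4) : ℕ :=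
  (Finset.univ.filter fun i => z i = a).card

/-! The count of a letter is a sum of indicators, and under a product weight the mean of the
indicator at position `i` only sees the weight at position `i`; this gives
`E[f'_A] = (1 - p) f_A + (p/3)(G - f_A)`, which is affine in `p` with slope `(G - 4 f_A)/3`. -/

section DiscMeasure

variable {α : Type*} [Fintype α] [MeasurableSpace α]

theorem discMeasure_apply_univ (w : α → ℝ) :
    discMeasure w Set.univ = ∑ a, ENNReal.ofReal (w a) := by
  simp [discMeasure]

theorem isProbabilityMeasure_discMeasure {w : α → ℝ} (hw : ∀ a, 0 ≤ w a) (hw1 : ∑ a, w a = 1) :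
    IsProbabilityMeasure (discMeasure w) := by
  constructor
  rw [discMeasure_apply_univ, ← ENNReal.ofReal_sum_of_nonneg fun a _ => hw a, hw1,
    ENNReal.ofReal_one]

theorem integral_discMeasure [MeasurableSingletonClass α] {w : α → ℝ} (hw : ∀ a, 0 ≤ w a)
    (f : α → ℝ) : ∫ a, f a ∂discMeasure w = ∑ a, w a * f a := by
  have (a : α) : IsFiniteMeasure (ENNReal.ofReal (w a) • Measure.dirac a) :=
    ⟨by simp [Measure.smul_apply]⟩
  rw [discMeasure, integral_finsetSum_measure fun a _ => Integrable.of_finite]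
  refine Finset.sum_congr rfl fun a _ => ?_
  rw [integral_smul_measure, integral_dirac, ENNReal.toReal_ofReal (hw a), smul_eq_mul]

end DiscMeasure

section ProductWeight

variable {ι β R : Type*} [Fintype ι] [DecidableEq ι] [Fintype β] [CommSemiring R]

theorem sum_prod_eq_one {w : ι → β → R} (hw : ∀ j, ∑ b, w j b = 1) :
    ∑ y : ι → β, ∏ j, w j (y j) = 1 := by
  simp [← Fintype.prod_sum, hw]

theorem sum_prod_mul_apply {w : ι → β → R} (hw : ∀ j, ∑ b, w j b = 1) (i : ι) (h : β → R) :
    ∑ y : ι → β, (∏ j, w j (y j)) * h (y i) = ∑ b, w i b * h b := by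
  set w' : ι → β → R := fun j b => w j b * if j = i then h b else 1
  have hw' (y : ι → β) : (∏ j, w j (y j)) * h (y i) = ∏ j, w' j (y j) := by
    simp only [w', Finset.prod_mul_distrib, Finset.prod_ite_eq', Finset.mem_univ, if_true]
  have hw'_ne (j : ι) (hj : j ≠ i) : ∑ b, w' j b = 1 := by simp [w', hj, hw j]
  rw [Finset.sum_congr rfl fun y _ => hw' y, ← Fintype.prod_sum,
    Fintype.prod_eq_single i hw'_ne]
  simp [w']

end ProductWeight

section Mutate

variable {G : ℕ}

theorem substW_nonneg {p : ℝ} (hp0 : 0 ≤ p) (hp1 : p ≤ 1) (a b : Fin 4) : 0 ≤ substW p a b := by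
  unfold substW; split <;> linarith

theorem sum_substW (p : ℝ) (a : Fin 4) : ∑ b, substW p a b = 1 := by
  fin_cases a <;> simp [substW, Fin.sum_univ_four] <;> ring

theorem mutateW_nonneg {p : ℝ} (hp0 : 0 ≤ p) (hp1 : p ≤ 1) (x y : Fin G → Fin 4) :
    0 ≤ mutateW p x y :=
  Finset.prod_nonneg fun _ _ => substW_nonneg hp0 hp1 _ _

theorem isProbabilityMeasure_mutate {p : ℝ} (hp0 : 0 ≤ p) (hp1 : p ≤ 1) (x : Fin G → Fin 4) :
    IsProbabilityMeasure (mutate p x) :=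
  isProbabilityMeasure_discMeasure (mutateW_nonneg hp0 hp1 x)
    (sum_prod_eq_one fun j => sum_substW p (x j))

theorem integral_mutate {p : ℝ} (hp0 : 0 ≤ p) (hp1 : p ≤ 1) (x : Fin G → Fin 4)
    (f : (Fin G → Fin 4) → ℝ) : ∫ y, f y ∂mutate p x = ∑ y, mutateW p x y * f y :=
  integral_discMeasure (mutateW_nonneg hp0 hp1 x) f

theorem countLetter_eq_sum (z : Fin G → Fin 4) (a : Fin 4) :
    (countLetter z a : ℝ) = ∑ i, if z i = a then 1 else 0 := by
  rw [countLetter, Finset.card_filter]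
  push_cast
  rfl

theorem sum_substW_apply (p : ℝ) (x : Fin G → Fin 4) (a : Fin 4) :
    ∑ i, substW p (x i) a = (1 - p) * countLetter x a + p / 3 * (G - countLetter x a) := by
  have hsplit (i : Fin G) :
      substW p (x i) a = p / 3 + (1 - p - p / 3) * if x i = a then 1 else 0 := by
    by_cases h : x i = a
    · simp [substW, h]
    · simp [substW, h, Ne.symm h]
  simp_rw [hsplit, Finset.sum_add_distrib, ← Finset.mul_sum, ← countLetter_eq_sum]
  simp only [Finset.sum_const, Finset.card_univ, Fintype.card_fin, nsmul_eq_mul]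
  ring

theorem integral_countLetter_mutate {p : ℝ} (hp0 : 0 ≤ p) (hp1 : p ≤ 1) (x : Fin G → Fin 4)
    (a : Fin 4) : ∫ y, (countLetter y a : ℝ) ∂mutate p x
      = (1 - p) * countLetter x a + p / 3 * (G - countLetter x a) := by
  have hmarginal (i : Fin G) :
      ∑ y, mutateW p x y * (if y i = a then 1 else 0) = substW p (x i) a := by
    simpa [mutateW] using sum_prod_mul_apply (fun j => sum_substW p (x j)) i
      (fun b => if b = a then (1 : ℝ) else 0)
  rw [integral_mutate hp0 hp1, ← sum_substW_apply, ← Finset.sum_congr rfl fun i _ => hmarginal i,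
    Finset.sum_comm]
  simp_rw [countLetter_eq_sum _ a, Finset.mul_sum]

end Mutate

/-- If `G ≠ 4·f_A`, the estimator
`p̂ = 3·(f'_A − f_A)/(G − 4·f_A)` is unbiased: `E[p̂] = p`. -/
theorem estimator_unbiased {G : ℕ} (x : Fin G → Fin 4) (p : ℝ) (hp0 : 0 ≤ p) (hp1 : p ≤ 1)
    (hG4 : (G : ℝ) ≠ 4 * (countLetter x 0 : ℝ)) :
    ∫ y, 3 * ((countLetter y 0 : ℝ) - (countLetter x 0 : ℝ))
        / ((G : ℝ) - 4 * (countLetter x 0 : ℝ)) ∂(mutate p x) = p := by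
  have := isProbabilityMeasure_mutate hp0 hp1 x
  have hD : (G : ℝ) - 4 * countLetter x 0 ≠ 0 := sub_ne_zero_of_ne hG4
  rw [integral_div, integral_const_mul, integral_sub (.of_finite) (.of_finite),
    integral_countLetter_mutate hp0 hp1, integral_const, probReal_univ, one_smul,
    div_eq_iff hD]
  ring

end
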